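/- arXiv:1409.1126 — 4 statements merged into one kernel-verified Lean document; each statement's English description precedes it below -/
import Mathlib

section
/- Let W, V₁, V₂ be Hilbert spaces and let T : W → V₁ × V₂ be a bounded linear operator which is Fredholm, i.e. ker T is finite-dimensional and the range of T is closed and of finite codimension. Let π₁, π₂ denote the projections of V₁ × V₂ onto its two factors, and assume that π₁ ∘ T : W → V₁ is surjective. Let N = ker(π₁ ∘ T) and let S : N → V₂ be the restriction of π₂ ∘ T to N. Then S is Fredholm with the same index as T; more precisely: ker S = ker T, the range of S is closed, and dim(V₂ / range S) = dim((V₁ × V₂) / range T). -/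
/-!
Because `π₁ ∘ T` is onto, every class of `(V₁ × V₂) ⧸ range T` has a representative `(0, v)`,
and `(0, v) ∈ range T` exactly when `v ∈ range S`. Hence `v ↦ [(0, v)]` induces an isomorphism
`V₂ ⧸ range S ≃ (V₁ × V₂) ⧸ range T`, and `range S`, the preimage of `range T` under `v ↦ (0, v)`,
is closed.
-/

namespace LinearMap

variable {R W M P : Type*} [Ring R] [AddCommGroup W] [Module R W] [AddCommGroup M] [Module R M]
  [AddCommGroup P] [Module R P] (T : W →ₗ[R] M × P)

theorem range_snd_comp_restrict_ker_fst :
    range ((snd R M P ∘ₗ T) ∘ₗ (ker (fst R M P ∘ₗ T)).subtype) = (range T).comap (inr R M P) := by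
  ext v
  constructor
  · rintro ⟨⟨w, hw⟩, rfl⟩
    exact ⟨w, Prod.ext hw rfl⟩
  · rintro ⟨w, hw⟩
    exact ⟨⟨w, congrArg Prod.fst hw⟩, congrArg Prod.snd hw⟩

theorem map_ker_snd_comp_restrict_ker_fst :
    (ker ((snd R M P ∘ₗ T) ∘ₗ (ker (fst R M P ∘ₗ T)).subtype)).map (ker (fst R M P ∘ₗ T)).subtype =
      ker T := by
  ext w
  constructor
  · rintro ⟨⟨w, hw₁⟩, hw₂, rfl⟩
    exact Prod.ext hw₁ hw₂
  · intro hw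
    exact ⟨⟨w, congrArg Prod.fst hw⟩, congrArg Prod.snd hw, rfl⟩

end LinearMap

namespace Submodule

variable {R M P : Type*} [Ring R] [AddCommGroup M] [Module R M] [AddCommGroup P] [Module R P]

theorem surjective_mkQ_comp_inr {K : Submodule R (M × P)} (hK : K.map (LinearMap.fst R M P) = ⊤) :
    Function.Surjective (K.mkQ ∘ₗ LinearMap.inr R M P) := by
  rintro ⟨m, p⟩
  obtain ⟨⟨m', p'⟩, hmem, rfl⟩ : m ∈ K.map (LinearMap.fst R M P) := hK ▸ mem_top
  refine ⟨p - p', (Quotient.eq K).2 ?_⟩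
  convert K.neg_mem hmem using 1
  ext <;> simp

noncomputable def quotientComapInrEquiv (K : Submodule R (M × P))
    (hK : K.map (LinearMap.fst R M P) = ⊤) :
    (P ⧸ K.comap (LinearMap.inr R M P)) ≃ₗ[R] (M × P) ⧸ K :=
  (quotEquivOfEq _ _ (by rw [LinearMap.ker_comp, ker_mkQ])).trans
    ((K.mkQ ∘ₗ LinearMap.inr R M P).quotKerEquivOfSurjective (surjective_mkQ_comp_inr hK))

end Submodule

theorem stmt_3_general {W V₁ V₂ : Type*}
    [NormedAddCommGroup W] [InnerProductSpace ℝ W]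
    [NormedAddCommGroup V₁] [InnerProductSpace ℝ V₁]
    [NormedAddCommGroup V₂] [InnerProductSpace ℝ V₂]
    (T : W →L[ℝ] V₁ × V₂)
    (hclosed : IsClosed (LinearMap.range (T : W →ₗ[ℝ] V₁ × V₂) : Set (V₁ × V₂)))
    (hcoker : FiniteDimensional ℝ ((V₁ × V₂) ⧸ LinearMap.range (T : W →ₗ[ℝ] V₁ × V₂)))
    (hsurj : Function.Surjective ((ContinuousLinearMap.fst ℝ V₁ V₂).comp T))
    (N : Submodule ℝ W) (hN : N = LinearMap.ker (((ContinuousLinearMap.fst ℝ V₁ V₂).comp T : W →L[ℝ] V₁) : W →ₗ[ℝ] V₁))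
    (S : N →L[ℝ] V₂) (hS : S = ((ContinuousLinearMap.snd ℝ V₁ V₂).comp T).comp N.subtypeL) :
    Submodule.map N.subtype (LinearMap.ker (S : N →ₗ[ℝ] V₂)) = LinearMap.ker (T : W →ₗ[ℝ] V₁ × V₂) ∧
    IsClosed (LinearMap.range (S : N →ₗ[ℝ] V₂) : Set V₂) ∧
    FiniteDimensional ℝ (V₂ ⧸ LinearMap.range (S : N →ₗ[ℝ] V₂)) ∧
    Module.finrank ℝ (V₂ ⧸ LinearMap.range (S : N →ₗ[ℝ] V₂)) =
      Module.finrank ℝ ((V₁ × V₂) ⧸ LinearMap.range (T : W →ₗ[ℝ] V₁ × V₂)) := by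
  have hrange : LinearMap.range (S : N →ₗ[ℝ] V₂) =
      (LinearMap.range (T : W →ₗ[ℝ] V₁ × V₂)).comap (LinearMap.inr ℝ V₁ V₂) := by
    subst hN hS
    exact LinearMap.range_snd_comp_restrict_ker_fst _
  have hfst : (LinearMap.range (T : W →ₗ[ℝ] V₁ × V₂)).map (LinearMap.fst ℝ V₁ V₂) = ⊤ := by
    rw [← LinearMap.range_comp]
    exact LinearMap.range_eq_top.2 hsurj
  let e := (Submodule.quotEquivOfEq _ _ hrange).trans (Submodule.quotientComapInrEquiv _ hfst)
  refine ⟨by subst hN hS; exact LinearMap.map_ker_snd_comp_restrict_ker_fst _, ?_,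
    Module.Finite.equiv e.symm, e.finrank_eq⟩
  rw [hrange]
  exact hclosed.preimage (ContinuousLinearMap.inr ℝ V₁ V₂).continuous

/-- Let `T : W → V₁ × V₂` be a bounded, Fredholm operator between Hilbert spaces
(finite-dimensional kernel, closed range of finite codimension) such that `π₁ ∘ T` is
surjective. Let `N = ker(π₁ ∘ T)` and let `S : N → V₂` be the restriction of `π₂ ∘ T` to `N`.
Then `S` is Fredholm with the same index as `T`: `ker S = ker T` (viewed in `W`), the range of
`S` is closed, and `dim(V₂ / range S) = dim((V₁ × V₂) / range T)`. -/
theorem stmt_3 {W V₁ V₂ : Type*}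
    [NormedAddCommGroup W] [InnerProductSpace ℝ W] [CompleteSpace W]
    [NormedAddCommGroup V₁] [InnerProductSpace ℝ V₁] [CompleteSpace V₁]
    [NormedAddCommGroup V₂] [InnerProductSpace ℝ V₂] [CompleteSpace V₂]
    (T : W →L[ℝ] V₁ × V₂)
    (hker : FiniteDimensional ℝ (LinearMap.ker (T : W →ₗ[ℝ] V₁ × V₂)))
    (hclosed : IsClosed (LinearMap.range (T : W →ₗ[ℝ] V₁ × V₂) : Set (V₁ × V₂)))
    (hcoker : FiniteDimensional ℝ ((V₁ × V₂) ⧸ LinearMap.range (T : W →ₗ[ℝ] V₁ × V₂)))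
    (hsurj : Function.Surjective ((ContinuousLinearMap.fst ℝ V₁ V₂).comp T))
    (N : Submodule ℝ W) (hN : N = LinearMap.ker (((ContinuousLinearMap.fst ℝ V₁ V₂).comp T : W →L[ℝ] V₁) : W →ₗ[ℝ] V₁))
    (S : N →L[ℝ] V₂) (hS : S = ((ContinuousLinearMap.snd ℝ V₁ V₂).comp T).comp N.subtypeL) :
    Submodule.map N.subtype (LinearMap.ker (S : N →ₗ[ℝ] V₂)) = LinearMap.ker (T : W →ₗ[ℝ] V₁ × V₂) ∧
    IsClosed (LinearMap.range (S : N →ₗ[ℝ] V₂) : Set V₂) ∧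
    FiniteDimensional ℝ (V₂ ⧸ LinearMap.range (S : N →ₗ[ℝ] V₂)) ∧
    Module.finrank ℝ (V₂ ⧸ LinearMap.range (S : N →ₗ[ℝ] V₂)) =
      Module.finrank ℝ ((V₁ × V₂) ⧸ LinearMap.range (T : W →ₗ[ℝ] V₁ × V₂)) :=
  stmt_3_general T hclosed hcoker hsurj N hN S hS
end

section
/- Let ε > 0 and let f : ℝ² → ℝ be continuously differentiable with support contained in the rectangle [0,1] × [0,ε]. Then ∫_{ℝ²} f(x,y)⁴ dx dy ≤ ε · ( ∫_{ℝ²} (∂₁f)² dx dy ) · ( ∫_{ℝ²} (∂₂f)² dx dy ); in particular ∫_{ℝ²} f⁴ ≤ ε · ( ∫_{ℝ²} ‖∇f‖² )². -/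
/-!
Along a horizontal line `f` vanishes to the left of its support, so by the fundamental theorem of
calculus and Cauchy–Schwarz on the interval of length `1` where `∂₁f` lives,
`f(x,y)² ≤ ∫ (∂₁f)(s,y)² ds =: G(y)`; on vertical lines the same argument over an interval of
length `ε` gives `f(x,y)² ≤ ε ∫ (∂₂f)(x,t)² dt =: ε H(x)`. Hence `f⁴ ≤ ε H(x) G(y)`, a product of
functions of one variable each, whose integral factors by Fubini as `ε (∫ (∂₁f)²)(∫ (∂₂f)²)`.
The gradient form then follows from `AB ≤ (A + B)²`.
-/

open MeasureTheory Set Function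

theorem sq_integral_le_measureReal_univ_mul_integral_sq {α : Type*} [MeasurableSpace α]
    {μ : Measure α} [IsFiniteMeasure μ] {h : α → ℝ}
    (hh : Integrable h μ) (hh2 : Integrable (fun x => h x ^ 2) μ) :
    (∫ x, h x ∂μ) ^ 2 ≤ μ.real univ * ∫ x, h x ^ 2 ∂μ := by
  set m := μ.real univ
  set I := ∫ x, h x ∂μ
  set J := ∫ x, h x ^ 2 ∂μ
  have hexpand : ∫ x, (m * h x - I) ^ 2 ∂μ = m * (m * J - I ^ 2) := by
    have hpt : ∀ x, (m * h x - I) ^ 2 = m ^ 2 * h x ^ 2 - 2 * m * I * h x + I ^ 2 :=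
      fun x => by ring
    have hint : Integrable (fun x => m ^ 2 * h x ^ 2 - 2 * m * I * h x) μ :=
      (hh2.const_mul _).sub (hh.const_mul _)
    simp_rw [hpt]
    rw [integral_add hint (integrable_const _),
      integral_sub (hh2.const_mul _) (hh.const_mul _), integral_const_mul, integral_const_mul,
      integral_const, smul_eq_mul]
    ring
  have hnonneg : 0 ≤ m * (m * J - I ^ 2) :=
    hexpand ▸ integral_nonneg fun x => sq_nonneg _
  rcases eq_zero_or_neZero μ with hμ | hμ
  · simp [I, m, hμ]
  · have : 0 < m := measureReal_univ_pos
    nlinarith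

theorem sq_le_mul_integral_sq_of_hasDerivAt {g g' : ℝ → ℝ} {a b : ℝ} (hab : a ≤ b)
    (hg : ∀ t, HasDerivAt g (g' t) t) (hg' : Continuous g') (hsupp : support g ⊆ Icc a b)
    (x : ℝ) : g x ^ 2 ≤ (b - a) * ∫ t, g' t ^ 2 := by
  have hcont : Continuous g := continuous_iff_continuousAt.2 fun t => (hg t).continuousAt
  have hsupp' : support g' ⊆ Icc a b := by
    rw [show g' = deriv g from funext fun t => (hg t).deriv.symm]
    exact support_deriv_subset.trans (closure_minimal hsupp isClosed_Icc)
  have hga : g a = 0 := by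
    have hzero : Iic a ⊆ {t | g t = 0} := by
      rw [← closure_Iio]
      exact closure_minimal (fun t ht => notMem_support.1 fun h => not_le.2 ht (hsupp h).1)
        (isClosed_eq hcont continuous_const)
    exact hzero self_mem_Iic
  by_cases hx : x ∈ Icc a b
  swap
  · rw [notMem_support.1 fun h => hx (hsupp h)]
    have : 0 ≤ ∫ t, g' t ^ 2 := integral_nonneg fun t => sq_nonneg _
    nlinarith
  have hftc : ∫ t in a..x, g' t = g x := by
    rw [intervalIntegral.integral_eq_sub_of_hasDerivAt (fun t _ => hg t)
      (hg'.intervalIntegrable a x), hga, sub_zero]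
  have habs : |g x| ≤ ∫ t in Icc a b, |g' t| :=
    calc |g x| ≤ ∫ t in a..x, |g' t| := hftc ▸ intervalIntegral.abs_integral_le_integral_abs hx.1
      _ = ∫ t in Ioc a x, |g' t| := intervalIntegral.integral_of_le hx.1
      _ ≤ ∫ t in Icc a b, |g' t| :=
        setIntegral_mono_set (hg'.abs.integrableOn_Icc) (ae_of_all _ fun t => abs_nonneg _)
          (Ioc_subset_Icc_self.trans (Icc_subset_Icc_right hx.2)).eventuallyLE
  calc g x ^ 2 = |g x| ^ 2 := (sq_abs _).symm
    _ ≤ (∫ t in Icc a b, |g' t|) ^ 2 := by gcongr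
    _ ≤ volume.real (Icc a b) * ∫ t in Icc a b, |g' t| ^ 2 :=
      sq_integral_le_measureReal_univ_mul_integral_sq hg'.abs.integrableOn_Icc
        (hg'.abs.pow 2).integrableOn_Icc |>.trans_eq (by rw [measureReal_restrict_apply_univ])
    _ = (b - a) * ∫ t, g' t ^ 2 := by
      simp only [sq_abs, Real.volume_real_Icc_of_le hab]
      rw [setIntegral_eq_integral_of_forall_compl_eq_zero fun t ht => by
        rw [notMem_support.1 fun h => ht (hsupp' h), zero_pow two_ne_zero]]

theorem sq_le_mul_integral_fderiv_fst_sq {f : ℝ × ℝ → ℝ} (hf : ContDiff ℝ 1 f) {a b : ℝ}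
    (hab : a ≤ b) (hsupp : support f ⊆ Icc a b ×ˢ univ) (x y : ℝ) :
    f (x, y) ^ 2 ≤ (b - a) * ∫ s, fderiv ℝ f (s, y) (1, 0) ^ 2 := by
  refine sq_le_mul_integral_sq_of_hasDerivAt hab (fun s => ?_) ?_
    (fun s hs => (@hsupp (s, y) hs).1) x
  · exact (hf.differentiable one_ne_zero (s, y)).hasFDerivAt.comp_hasDerivAt s
      ((hasDerivAt_id s).prodMk (hasDerivAt_const s y))
  · exact ((hf.continuous_fderiv one_ne_zero).clm_apply continuous_const).comp (by fun_prop)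

theorem sq_le_mul_integral_fderiv_snd_sq {f : ℝ × ℝ → ℝ} (hf : ContDiff ℝ 1 f) {a b : ℝ}
    (hab : a ≤ b) (hsupp : support f ⊆ univ ×ˢ Icc a b) (x y : ℝ) :
    f (x, y) ^ 2 ≤ (b - a) * ∫ t, fderiv ℝ f (x, t) (0, 1) ^ 2 := by
  refine sq_le_mul_integral_sq_of_hasDerivAt hab (fun t => ?_) ?_
    (fun t ht => (@hsupp (x, t) ht).2) y
  · exact (hf.differentiable one_ne_zero (x, t)).hasFDerivAt.comp_hasDerivAt t
      ((hasDerivAt_const t x).prodMk (hasDerivAt_id t))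
  · exact ((hf.continuous_fderiv one_ne_zero).clm_apply continuous_const).comp (by fun_prop)

theorem integral_le_integral_mul_integral_of_le_sections {α β : Type*} [MeasurableSpace α]
    [MeasurableSpace β] {μ : Measure α} {ν : Measure β} [SFinite μ] [SFinite ν]
    {φ P Q : α × β → ℝ} (hφ : Integrable φ (μ.prod ν)) (hP : Integrable P (μ.prod ν))
    (hQ : Integrable Q (μ.prod ν))
    (hle : ∀ x y, φ (x, y) ≤ (∫ s, P (s, y) ∂μ) * ∫ t, Q (x, t) ∂ν) :
    ∫ z, φ z ∂(μ.prod ν) ≤ (∫ z, P z ∂(μ.prod ν)) * ∫ z, Q z ∂(μ.prod ν) :=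
  calc ∫ z, φ z ∂(μ.prod ν)
      ≤ ∫ z, (∫ t, Q (z.1, t) ∂ν) * ∫ s, P (s, z.2) ∂μ ∂(μ.prod ν) :=
        integral_mono hφ (hQ.integral_prod_left.mul_prod hP.integral_prod_right)
          fun z => (hle z.1 z.2).trans_eq (mul_comm _ _)
    _ = (∫ z, P z ∂(μ.prod ν)) * ∫ z, Q z ∂(μ.prod ν) := by
      rw [integral_prod_mul (fun x => ∫ t, Q (x, t) ∂ν) (fun y => ∫ s, P (s, y) ∂μ),
        ← integral_prod _ hQ, ← integral_prod_symm _ hP, mul_comm]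

theorem ContDiff.integrable_fderiv_apply_sq {E : Type*} [NormedAddCommGroup E]
    [NormedSpace ℝ E] [MeasurableSpace E] [OpensMeasurableSpace E] {μ : Measure E}
    [IsFiniteMeasureOnCompacts μ] {f : E → ℝ} (hf : ContDiff ℝ 1 f) (hfcs : HasCompactSupport f)
    (v : E) : Integrable (fun p => fderiv ℝ f p v ^ 2) μ :=
  (((hf.continuous_fderiv one_ne_zero).clm_apply continuous_const).pow 2)
    |>.integrable_of_hasCompactSupport
      ((hfcs.fderiv_apply ℝ v).mono fun _ hp => (pow_ne_zero_iff two_ne_zero).1 hp)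

theorem integral_pow_four_le_of_support_subset_Icc_prod_Icc {f : ℝ × ℝ → ℝ} (hf : ContDiff ℝ 1 f)
    {a b c d : ℝ} (hab : a ≤ b) (hcd : c ≤ d) (hsupp : support f ⊆ Icc a b ×ˢ Icc c d) :
    ∫ p, f p ^ 4 ≤
      (b - a) * (d - c) * (∫ p, fderiv ℝ f p (1, 0) ^ 2) * ∫ p, fderiv ℝ f p (0, 1) ^ 2 := by
  have hfcs : HasCompactSupport f :=
    .of_support_subset_isCompact (isCompact_Icc.prod isCompact_Icc) hsupp
  have hf4 : Integrable (fun p => f p ^ 4) :=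
    (hf.continuous.pow 4).integrable_of_hasCompactSupport
      (hfcs.mono fun _ hp => (pow_ne_zero_iff four_ne_zero).1 hp)
  have hle : ∫ p, f p ^ 4 ≤ (∫ p, (b - a) * fderiv ℝ f p (1, 0) ^ 2) *
      ∫ p, (d - c) * fderiv ℝ f p (0, 1) ^ 2 := by
    refine integral_le_integral_mul_integral_of_le_sections hf4
      ((hf.integrable_fderiv_apply_sq hfcs _).const_mul _)
      ((hf.integrable_fderiv_apply_sq hfcs _).const_mul _) fun x y => ?_
    have h₁ := sq_le_mul_integral_fderiv_fst_sq hf hab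
      (hsupp.trans (prod_mono le_rfl (subset_univ _))) x y
    have h₂ := sq_le_mul_integral_fderiv_snd_sq hf hcd
      (hsupp.trans (prod_mono (subset_univ _) le_rfl)) x y
    rw [integral_const_mul, integral_const_mul]
    calc f (x, y) ^ 4 = f (x, y) ^ 2 * f (x, y) ^ 2 := by ring
      _ ≤ _ := mul_le_mul h₁ h₂ (sq_nonneg _) (h₁.trans' (sq_nonneg _))
  exact hle.trans_eq (by rw [integral_const_mul, integral_const_mul]; ring)

/-- For `ε > 0` and `f : ℝ² → ℝ` continuously differentiable with support in the
rectangle `[0,1] × [0,ε]`, one has the anisotropic Ladyzhenskaya-type inequality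
`∫ f⁴ ≤ ε (∫ (∂₁f)²)(∫ (∂₂f)²)`, and in particular `∫ f⁴ ≤ ε (∫ ‖∇f‖²)²` where
`‖∇f‖² = (∂₁f)² + (∂₂f)²`. -/
theorem stmt_6 (ε : ℝ) (hε : 0 < ε) (f : ℝ × ℝ → ℝ) (hf : ContDiff ℝ 1 f)
    (hsupp : Function.support f ⊆ Set.Icc 0 1 ×ˢ Set.Icc 0 ε) :
    (∫ p : ℝ × ℝ, f p ^ 4)
        ≤ ε * (∫ p : ℝ × ℝ, (fderiv ℝ f p (1, 0)) ^ 2)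
            * (∫ p : ℝ × ℝ, (fderiv ℝ f p (0, 1)) ^ 2) ∧
    (∫ p : ℝ × ℝ, f p ^ 4)
        ≤ ε * (∫ p : ℝ × ℝ, ((fderiv ℝ f p (1, 0)) ^ 2 + (fderiv ℝ f p (0, 1)) ^ 2)) ^ 2 := by
  have hmain := integral_pow_four_le_of_support_subset_Icc_prod_Icc hf zero_le_one hε.le hsupp
  rw [sub_zero, sub_zero, one_mul] at hmain
  refine ⟨hmain, hmain.trans ?_⟩
  have hfcs : HasCompactSupport f :=
    .of_support_subset_isCompact (isCompact_Icc.prod isCompact_Icc) hsupp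
  have hA : 0 ≤ ∫ p, fderiv ℝ f p (1, 0) ^ 2 := integral_nonneg fun p => sq_nonneg _
  have hB : 0 ≤ ∫ p, fderiv ℝ f p (0, 1) ^ 2 := integral_nonneg fun p => sq_nonneg _
  rw [integral_add (hf.integrable_fderiv_apply_sq hfcs _) (hf.integrable_fderiv_apply_sq hfcs _),
    mul_assoc]
  gcongr
  nlinarith
end

section
/- Let V, W, V', W' be Hilbert spaces. Let A_i : V → W and A'_i : V' → W' be uniformly bounded sequences of bounded linear operators converging pointwise to bounded operators A and A' respectively, and assume the adjoints A_i* converge pointwise to A*. Let K_i : W → V' be a sequence of compact operators converging in operator norm to K : W → V'. Then A'_i ∘ K_i ∘ A_i converges to A' ∘ K ∘ A in operator norm. -/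
/-!
Write `A'ᵢKᵢAᵢ - A'KA = A'ᵢ(Kᵢ - K)Aᵢ + A'ᵢK(Aᵢ - A) + (A'ᵢ - A')KA`. The first term is small
because `Kᵢ → K` in norm and `A'ᵢ`, `Aᵢ` are bounded. A uniformly bounded family is equicontinuous,
so pointwise convergence is uniform on the compact closure of the image of the unit ball under
a compact operator; this handles the last term, and, applied to the adjoints `Aᵢ*` and the compact
operator `K*K`, also the middle one through the C⋆-identity `‖K E‖² = ‖E* (K*K) E‖`.
The limit `K` is compact as a norm limit of compact operators.
-/

open Filter Topology

namespace ContinuousLinearMap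

section Normed

variable {𝕜 E F G ι : Type*} [RCLike 𝕜]
  [NormedAddCommGroup E] [NormedSpace 𝕜 E] [NormedAddCommGroup F] [NormedSpace 𝕜 F]
  [NormedAddCommGroup G] [NormedSpace 𝕜 G] {l : Filter ι}

theorem tendstoUniformlyOn_of_forall_tendsto {D : ι → F →L[𝕜] G} {D₀ : F →L[𝕜] G} {C : ℝ}
    (hC : ∀ i, ‖D i‖ ≤ C) (h : ∀ x, Tendsto (fun i => D i x) l (𝓝 (D₀ x)))
    {S : Set F} (hS : IsCompact S) :
    TendstoUniformlyOn (fun i => ⇑(D i)) D₀ l S := by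
  have hTFAE := (NormedSpace.equicontinuous_TFAE D).out 5 1
  have hD : Equicontinuous ((↑) ∘ D : ι → F → G) := hTFAE.mp ⟨C, hC⟩
  have := (EquicontinuousOn.tendsto_uniformOnFun_iff_pi' (𝔖 := {S}) (by simpa using hS)
    (fun _ _ => hD.equicontinuousOn _) l D₀).2 (tendsto_pi_nhds.2 fun x => h x)
  exact UniformOnFun.tendsto_iff_tendstoUniformlyOn.1 this S rfl

theorem tendsto_comp_of_isCompactOperator {D : ι → F →L[𝕜] G} {D₀ : F →L[𝕜] G} {C : ℝ}
    (hC : ∀ i, ‖D i‖ ≤ C) (h : ∀ x, Tendsto (fun i => D i x) l (𝓝 (D₀ x)))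
    {T : E →L[𝕜] F} (hT : IsCompactOperator T) :
    Tendsto (fun i => (D i).comp T) l (𝓝 (D₀.comp T)) := by
  have hunif := Metric.tendstoUniformlyOn_iff.1 <| tendstoUniformlyOn_of_forall_tendsto hC h
    (hT.isCompact_closure_image_closedBall (𝕜₁ := 𝕜) (f := (T : E →ₗ[𝕜] F)) 1)
  refine Metric.tendsto_nhds.2 fun ε hε => ?_
  filter_upwards [hunif (ε / 2) (half_pos hε)] with i hi
  rw [dist_eq_norm]
  refine lt_of_le_of_lt (opNorm_le_of_unit_norm (half_pos hε).le fun x hx => ?_) (half_lt_self hε)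
  rw [sub_apply, comp_apply, comp_apply, ← dist_eq_norm']
  exact (hi (T x) (subset_closure ⟨x, by simp [hx], rfl⟩)).le

theorem tendsto_comp_of_tendsto_right {D : ι → F →L[𝕜] G} {X : E →L[𝕜] G}
    (hD : IsBoundedUnder (· ≤ ·) l (norm ∘ D)) {T : ι → E →L[𝕜] F} {T₀ : E →L[𝕜] F}
    (hT : Tendsto T l (𝓝 T₀)) (h : Tendsto (fun i => (D i).comp T₀) l (𝓝 X)) :
    Tendsto (fun i => (D i).comp (T i)) l (𝓝 X) := by
  have hsmall : Tendsto (fun i => (D i).comp (T i - T₀)) l (𝓝 0) :=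
    (tendsto_sub_nhds_zero_iff.2 hT).op_zero_isBoundedUnder_le hD (fun S D => D.comp S)
      fun S D => (opNorm_comp_le D S).trans_eq (mul_comm _ _)
  simpa [comp_sub] using hsmall.add h

theorem tendsto_comp_of_tendsto_left {D : ι → E →L[𝕜] F} {X : E →L[𝕜] G}
    (hD : IsBoundedUnder (· ≤ ·) l (norm ∘ D)) {T : ι → F →L[𝕜] G} {T₀ : F →L[𝕜] G}
    (hT : Tendsto T l (𝓝 T₀)) (h : Tendsto (fun i => T₀.comp (D i)) l (𝓝 X)) :
    Tendsto (fun i => (T i).comp (D i)) l (𝓝 X) := by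
  have hsmall : Tendsto (fun i => (T i - T₀).comp (D i)) l (𝓝 0) :=
    (tendsto_sub_nhds_zero_iff.2 hT).op_zero_isBoundedUnder_le hD (fun S D => S.comp D)
      fun S D => opNorm_comp_le S D
  simpa [sub_comp] using hsmall.add h

end Normed

section Hilbert

variable {𝕜 E F G ι : Type*} [RCLike 𝕜]
  [NormedAddCommGroup E] [InnerProductSpace 𝕜 E] [CompleteSpace E]
  [NormedAddCommGroup F] [InnerProductSpace 𝕜 F] [CompleteSpace F]
  [NormedAddCommGroup G] [InnerProductSpace 𝕜 G] [CompleteSpace G] {l : Filter ι}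

theorem tendsto_isCompactOperator_comp {D : ι → E →L[𝕜] F} {D₀ : E →L[𝕜] F} {C : ℝ}
    (hC : ∀ i, ‖D i‖ ≤ C) (h : ∀ y, Tendsto (fun i => adjoint (D i) y) l (𝓝 (adjoint D₀ y)))
    {T : F →L[𝕜] G} (hT : IsCompactOperator T) :
    Tendsto (fun i => T.comp (D i)) l (𝓝 (T.comp D₀)) := by
  have hTT : Tendsto (fun i => ‖(adjoint (D i - D₀)).comp (adjoint T ∘L T)‖) l (𝓝 0) := by
    have := tendsto_comp_of_isCompactOperator (C := C) (fun i => by simpa using hC i) h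
      (T := adjoint T ∘L T) (hT.clm_comp (adjoint T))
    simpa [map_sub, sub_comp] using tendsto_iff_norm_sub_tendsto_zero.1 this
  have hbdd : IsBoundedUnder (· ≤ ·) l (norm ∘ fun i => ‖D i - D₀‖) :=
    isBoundedUnder_of ⟨C + ‖D₀‖, fun i => by
      simpa only [Function.comp_apply, norm_norm] using
        (norm_sub_le _ _).trans (add_le_add_left (hC i) _)⟩
  have hsq : ∀ i, ‖T.comp (D i - D₀)‖ * ‖T.comp (D i - D₀)‖ ≤
      ‖(adjoint (D i - D₀)).comp (adjoint T ∘L T)‖ * ‖D i - D₀‖ := fun i => by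
    rw [← norm_adjoint_comp_self, adjoint_comp]
    exact opNorm_comp_le (adjoint (D i - D₀) ∘L adjoint T ∘L T) (D i - D₀)
  have hsq0 := squeeze_zero (fun i => mul_self_nonneg _) hsq (hTT.zero_mul_isBoundedUnder_le hbdd)
  refine tendsto_iff_norm_sub_tendsto_zero.2 ?_
  simpa [← comp_sub, Real.sqrt_mul_self (norm_nonneg _)] using hsq0.sqrt

end Hilbert

end ContinuousLinearMap

theorem stmt_12_general {V W V' W' : Type*}
    [NormedAddCommGroup V] [InnerProductSpace ℝ V] [CompleteSpace V]
    [NormedAddCommGroup W] [InnerProductSpace ℝ W] [CompleteSpace W]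
    [NormedAddCommGroup V'] [InnerProductSpace ℝ V'] [CompleteSpace V']
    [NormedAddCommGroup W'] [InnerProductSpace ℝ W'] [CompleteSpace W']
    (A : ℕ → V →L[ℝ] W) (Alim : V →L[ℝ] W)
    (A' : ℕ → V' →L[ℝ] W') (A'lim : V' →L[ℝ] W')
    (M : ℝ) (hM : ∀ i, ‖A i‖ ≤ M) (M' : ℝ) (hM' : ∀ i, ‖A' i‖ ≤ M')
    (hpt' : ∀ v : V', Tendsto (fun i => A' i v) atTop (nhds (A'lim v)))
    (hadj : ∀ w : W, Tendsto (fun i => ContinuousLinearMap.adjoint (A i) w) atTop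
      (nhds (ContinuousLinearMap.adjoint Alim w)))
    (K : ℕ → W →L[ℝ] V') (Klim : W →L[ℝ] V')
    (hKcpt : ∀ i, IsCompactOperator ⇑(K i))
    (hKnorm : Tendsto (fun i => ‖K i - Klim‖) atTop (nhds 0)) :
    Tendsto (fun i => ‖((A' i).comp (K i)).comp (A i) - (A'lim.comp Klim).comp Alim‖)
      atTop (nhds 0) := by
  have hK : Tendsto K atTop (𝓝 Klim) := tendsto_iff_norm_sub_tendsto_zero.2 hKnorm
  have hKlim : IsCompactOperator Klim := isCompactOperator_of_tendsto hK (.of_forall hKcpt)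
  have hKA : Tendsto (fun i => (K i).comp (A i)) atTop (𝓝 (Klim.comp Alim)) :=
    ContinuousLinearMap.tendsto_comp_of_tendsto_left (isBoundedUnder_of ⟨M, hM⟩) hK
      (ContinuousLinearMap.tendsto_isCompactOperator_comp hM hadj hKlim)
  have hA'KA : Tendsto (fun i => (A' i).comp ((K i).comp (A i))) atTop
      (𝓝 (A'lim.comp (Klim.comp Alim))) :=
    ContinuousLinearMap.tendsto_comp_of_tendsto_right (isBoundedUnder_of ⟨M', hM'⟩) hKA
      (ContinuousLinearMap.tendsto_comp_of_isCompactOperator hM' hpt' (hKlim.comp_clm Alim))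
  simpa only [ContinuousLinearMap.comp_assoc] using tendsto_iff_norm_sub_tendsto_zero.1 hA'KA

/-- Let `V, W, V', W'` be Hilbert spaces, `A_i : V → W` and `A'_i : V' → W'`
uniformly bounded sequences of bounded operators converging pointwise to `A` and `A'`
respectively, with the adjoints `A_i*` converging pointwise to `A*`, and let `K_i : W → V'` be
compact operators converging in operator norm to `K`. Then `A'_i ∘ K_i ∘ A_i → A' ∘ K ∘ A`
in operator norm. -/
theorem stmt_12 {V W V' W' : Type*}
    [NormedAddCommGroup V] [InnerProductSpace ℝ V] [CompleteSpace V]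
    [NormedAddCommGroup W] [InnerProductSpace ℝ W] [CompleteSpace W]
    [NormedAddCommGroup V'] [InnerProductSpace ℝ V'] [CompleteSpace V']
    [NormedAddCommGroup W'] [InnerProductSpace ℝ W'] [CompleteSpace W']
    (A : ℕ → V →L[ℝ] W) (Alim : V →L[ℝ] W)
    (A' : ℕ → V' →L[ℝ] W') (A'lim : V' →L[ℝ] W')
    (M : ℝ) (hM : ∀ i, ‖A i‖ ≤ M) (M' : ℝ) (hM' : ∀ i, ‖A' i‖ ≤ M')
    (hpt : ∀ v : V, Tendsto (fun i => A i v) atTop (nhds (Alim v)))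
    (hpt' : ∀ v : V', Tendsto (fun i => A' i v) atTop (nhds (A'lim v)))
    (hadj : ∀ w : W, Tendsto (fun i => ContinuousLinearMap.adjoint (A i) w) atTop
      (nhds (ContinuousLinearMap.adjoint Alim w)))
    (K : ℕ → W →L[ℝ] V') (Klim : W →L[ℝ] V')
    (hKcpt : ∀ i, IsCompactOperator ⇑(K i))
    (hKnorm : Tendsto (fun i => ‖K i - Klim‖) atTop (nhds 0)) :
    Tendsto (fun i => ‖((A' i).comp (K i)).comp (A i) - (A'lim.comp Klim).comp Alim‖)
      atTop (nhds 0) :=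
  stmt_12_general A Alim A' A'lim M hM M' hM' hpt' hadj K Klim hKcpt hKnorm
end

section
/- Let B be a set equipped with two topologies: a topology 𝒯 and a coarser Hausdorff topology 𝒯_w (every 𝒯_w-open set is 𝒯-open). Let C : B → ℝ, let P and Q be topological spaces, and let σ : P → B and τ : Q → B be maps that are continuous as maps into (B, 𝒯_w). Assume: (1) C is bounded below on σ(P) and bounded above on τ(Q); (2) whenever a sequence σ(p_i) converges in 𝒯_w to some y ∈ B, one has liminf_i C(σ(p_i)) ≥ C(y), and whenever τ(q_i) converges in 𝒯_w to some y ∈ B, one has limsup_i C(τ(q_i)) ≤ C(y); (3) whenever σ(p_i) converges in 𝒯_w to y and C(σ(p_i)) → C(y), the sequence (p_i) has a convergent subsequence in P, and likewise whenever τ(q_i) converges in 𝒯_w to y and C(τ(q_i)) → C(y), the sequence (q_i) has a convergent subsequence in Q; (4) every sequence in σ(P) on which C is bounded has a 𝒯_w-convergent subsequence with limit in B, and the same holds for sequences in τ(Q). Then the fiber product {(p,q) ∈ P × Q : σ(p) = τ(q)} is sequentially compact: every sequence (p_i, q_i) with σ(p_i) = τ(q_i) has a subsequence converging in P × Q to a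 point (p, q) with σ(p) = τ(q). -/
open Filter Topology

/-!
Along a sequence with `σ (p i) = τ (q i)` the values of `C` are bounded below (from `σ`) and
above (from `τ`), so a subsequence of the images converges weakly to some `y`. Lower
semicontinuity along `σ` and upper semicontinuity along `τ` then squeeze `C` to `C y`: no energy
is lost in the limit, so the compactness axiom on each side yields convergent subsequences in `P`
and `Q`, and their images are both `y` because weak limits are unique.
-/

theorem exists_subseq_tendsto_and_map_eq {X B : Type*} [TopologicalSpace X]
    [TopologicalSpace B] [T2Space B] {f : X → B} (hf : Continuous f) {x : ℕ → X} {y : B}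
    (hx : Tendsto (fun i => f (x i)) atTop (𝓝 y))
    (hsub : ∃ φ : ℕ → ℕ, StrictMono φ ∧ ∃ a : X, Tendsto (fun i => x (φ i)) atTop (𝓝 a)) :
    ∃ φ : ℕ → ℕ, StrictMono φ ∧ ∃ a : X, f a = y ∧ Tendsto (fun i => x (φ i)) atTop (𝓝 a) := by
  obtain ⟨φ, hφ, a, ha⟩ := hsub
  exact ⟨φ, hφ, a, tendsto_nhds_unique ((hf.tendsto a).comp ha) (hx.comp hφ.tendsto_atTop), ha⟩

theorem stmt_13_general {B P Q : Type*} (tw : TopologicalSpace B)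
    [TopologicalSpace P] [TopologicalSpace Q]
    (hT2 : @T2Space B tw)
    (C : B → ℝ) (σ : P → B) (τ : Q → B)
    (hσcont : Continuous[_, tw] σ) (hτcont : Continuous[_, tw] τ)
    (hbelow : ∃ m : ℝ, ∀ p : P, m ≤ C (σ p))
    (habove : ∃ M : ℝ, ∀ q : Q, C (τ q) ≤ M)
    (hlsc : ∀ (p : ℕ → P) (y : B), Tendsto (fun i => σ (p i)) atTop (@nhds B tw y) →
      ∀ c : ℝ, c < C y → ∀ᶠ i in atTop, c < C (σ (p i)))
    (husc : ∀ (q : ℕ → Q) (y : B), Tendsto (fun i => τ (q i)) atTop (@nhds B tw y) →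
      ∀ c : ℝ, C y < c → ∀ᶠ i in atTop, C (τ (q i)) < c)
    (hσcvg : ∀ (p : ℕ → P) (y : B), Tendsto (fun i => σ (p i)) atTop (@nhds B tw y) →
      Tendsto (fun i => C (σ (p i))) atTop (nhds (C y)) →
      ∃ φ : ℕ → ℕ, StrictMono φ ∧ ∃ x : P, Tendsto (fun i => p (φ i)) atTop (nhds x))
    (hτcvg : ∀ (q : ℕ → Q) (y : B), Tendsto (fun i => τ (q i)) atTop (@nhds B tw y) →
      Tendsto (fun i => C (τ (q i))) atTop (nhds (C y)) →
      ∃ φ : ℕ → ℕ, StrictMono φ ∧ ∃ x : Q, Tendsto (fun i => q (φ i)) atTop (nhds x))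
    (hσwcpt : ∀ p : ℕ → P, (∃ M : ℝ, ∀ i, |C (σ (p i))| ≤ M) →
      ∃ φ : ℕ → ℕ, StrictMono φ ∧ ∃ y : B,
        Tendsto (fun i => σ (p (φ i))) atTop (@nhds B tw y)) :
    ∀ (p : ℕ → P) (q : ℕ → Q), (∀ i, σ (p i) = τ (q i)) →
      ∃ φ : ℕ → ℕ, StrictMono φ ∧ ∃ (a : P) (b : Q), σ a = τ b ∧
        Tendsto (fun i => p (φ i)) atTop (nhds a) ∧
        Tendsto (fun i => q (φ i)) atTop (nhds b) := by
  let _ : TopologicalSpace B := tw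
  intro p q hpq
  obtain ⟨m, hm⟩ := hbelow
  obtain ⟨M, hM⟩ := habove
  have hbdd : ∃ M' : ℝ, ∀ i, |C (σ (p i))| ≤ M' :=
    ⟨max |m| |M|, fun i => abs_le_max_abs_abs (hm (p i)) (hpq i ▸ hM (q i))⟩
  obtain ⟨φ, hφ, y, hσy⟩ := hσwcpt p hbdd
  have hτy : Tendsto (fun i => τ (q (φ i))) atTop (𝓝 y) := by simpa only [hpq] using hσy
  have hCy : Tendsto (fun i => C (σ (p (φ i)))) atTop (𝓝 (C y)) :=
    tendsto_order.2 ⟨hlsc _ y hσy, by simpa only [hpq] using husc _ y hτy⟩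
  obtain ⟨ψ, hψ, a, hay, hpa⟩ :=
    exists_subseq_tendsto_and_map_eq hσcont hσy (hσcvg _ y hσy hCy)
  have hτψ : Tendsto (fun i => τ (q (φ (ψ i)))) atTop (𝓝 y) := hτy.comp hψ.tendsto_atTop
  have hCψ : Tendsto (fun i => C (τ (q (φ (ψ i))))) atTop (𝓝 (C y)) := by
    simpa only [hpq, Function.comp_def] using hCy.comp hψ.tendsto_atTop
  obtain ⟨χ, hχ, b, hby, hqb⟩ :=
    exists_subseq_tendsto_and_map_eq hτcont hτψ (hτcvg _ y hτψ hCψ)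
  exact ⟨fun i => φ (ψ (χ i)), (hφ.comp hψ).comp hχ, a, b, hay.trans hby.symm,
    hpa.comp hχ.tendsto_atTop, hqb⟩

/-- Let `B` carry a topology `t` and a coarser Hausdorff ("weak") topology `tw`,
let `C : B → ℝ`, and let `σ : P → B`, `τ : Q → B` be weakly continuous maps from topological
spaces `P`, `Q` satisfying the sequential forms of Axioms 1–3 for a semi-infinite cycle in
`(B, C)` and in `(-B, -C)` respectively: `C` is bounded below on `σ(P)` and above on `τ(Q)`;
`C` is weakly sequentially lower semicontinuous along `σ` and upper semicontinuous along `τ`;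
weak convergence of the images with no loss of `C` forces subsequential convergence upstairs;
and sequences in the images with `C` bounded are weakly sequentially precompact. Then the fiber
product `{(p,q) : σ(p) = τ(q)}` is sequentially compact. -/
theorem stmt_13 {B P Q : Type*} (t tw : TopologicalSpace B)
    [TopologicalSpace P] [TopologicalSpace Q]
    (hcoarser : ∀ s : Set B, IsOpen[tw] s → IsOpen[t] s)
    (hT2 : @T2Space B tw)
    (C : B → ℝ) (σ : P → B) (τ : Q → B)
    (hσcont : Continuous[_, tw] σ) (hτcont : Continuous[_, tw] τ)
    (hbelow : ∃ m : ℝ, ∀ p : P, m ≤ C (σ p))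
    (habove : ∃ M : ℝ, ∀ q : Q, C (τ q) ≤ M)
    (hlsc : ∀ (p : ℕ → P) (y : B), Tendsto (fun i => σ (p i)) atTop (@nhds B tw y) →
      ∀ c : ℝ, c < C y → ∀ᶠ i in atTop, c < C (σ (p i)))
    (husc : ∀ (q : ℕ → Q) (y : B), Tendsto (fun i => τ (q i)) atTop (@nhds B tw y) →
      ∀ c : ℝ, C y < c → ∀ᶠ i in atTop, C (τ (q i)) < c)
    (hσcvg : ∀ (p : ℕ → P) (y : B), Tendsto (fun i => σ (p i)) atTop (@nhds B tw y) →
      Tendsto (fun i => C (σ (p i))) atTop (nhds (C y)) →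
      ∃ φ : ℕ → ℕ, StrictMono φ ∧ ∃ x : P, Tendsto (fun i => p (φ i)) atTop (nhds x))
    (hτcvg : ∀ (q : ℕ → Q) (y : B), Tendsto (fun i => τ (q i)) atTop (@nhds B tw y) →
      Tendsto (fun i => C (τ (q i))) atTop (nhds (C y)) →
      ∃ φ : ℕ → ℕ, StrictMono φ ∧ ∃ x : Q, Tendsto (fun i => q (φ i)) atTop (nhds x))
    (hσwcpt : ∀ p : ℕ → P, (∃ M : ℝ, ∀ i, |C (σ (p i))| ≤ M) →
      ∃ φ : ℕ → ℕ, StrictMono φ ∧ ∃ y : B,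
        Tendsto (fun i => σ (p (φ i))) atTop (@nhds B tw y))
    (hτwcpt : ∀ q : ℕ → Q, (∃ M : ℝ, ∀ i, |C (τ (q i))| ≤ M) →
      ∃ φ : ℕ → ℕ, StrictMono φ ∧ ∃ y : B,
        Tendsto (fun i => τ (q (φ i))) atTop (@nhds B tw y)) :
    ∀ (p : ℕ → P) (q : ℕ → Q), (∀ i, σ (p i) = τ (q i)) →
      ∃ φ : ℕ → ℕ, StrictMono φ ∧ ∃ (a : P) (b : Q), σ a = τ b ∧
        Tendsto (fun i => p (φ i)) atTop (nhds a) ∧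
        Tendsto (fun i => q (φ i)) atTop (nhds b) :=
  stmt_13_general tw hT2 C σ τ hσcont hτcont hbelow habove hlsc husc hσcvg hτcvg hσwcpt
end
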